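/- For all u₁, u₂, u₃ ∈ ℂ, the sl(3) Lax matrix admits the factorization L(u₁,u₂,u₃) = M₋ · U · M₊, an identity of 3×3 matrices of ℂ-linear endomorphisms of ℂ[x,y,z], where M₋ = [[1,0,0],[−x,1,0],[−y,−z,1]], U = [[u₁, ∂ₓ−z∂_y, ∂_y],[0, u₂, ∂_z],[0,0,u₃]], M₊ = [[1,0,0],[x,1,0],[y+xz, z, 1]], and L(u₁,u₂,u₃) is the matrix with entries L₁₁ = x∂ₓ+y∂_y+u₁+2, L₁₂ = ∂ₓ, L₁₃ = ∂_y, L₂₁ = −x²∂ₓ − xy∂_y + (xz+y)∂_z + (u₂−u₁−1)x, L₂₂ = −x∂ₓ+z∂_z+u₂+1, L₂₃ = ∂_z−x∂_y, L₃₁ = −xy∂ₓ − y²∂_y − z(xz+y)∂_z + (u₃−u₂−1)xz + (u₃−u₁−2)y, L₃₂ = −y∂ₓ − z²∂_z + (u₃−u₂−1)z, L₃₃ = −y∂_y−z∂_z+u₃. -/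

import Mathlib

open MvPolynomial

/-- The endomorphism ring of `ℂ[x,y,z]` (variables `x = X 0`, `y = X 1`, `z = X 2`). -/
abbrev E3 : Type := Module.End ℂ (MvPolynomial (Fin 3) ℂ)

/-- Multiplication operators `x, y, z` on `ℂ[x,y,z]`. -/
noncomputable def Zm (i : Fin 3) : E3 := LinearMap.mulLeft ℂ (X i)

/-- Partial derivatives `∂ₓ, ∂_y, ∂_z` on `ℂ[x,y,z]`. -/
noncomputable def Dm (i : Fin 3) : E3 := (pderiv i).toLinearMap

/-- The `sl(3)` Lax matrix `L(u₁,u₂,u₃)`. -/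
noncomputable def L3 (u₁ u₂ u₃ : ℂ) : Matrix (Fin 3) (Fin 3) E3 :=
  !![Zm 0 * Dm 0 + Zm 1 * Dm 1 + (u₁ + 2) • 1, Dm 0, Dm 1;
     -(Zm 0 * Zm 0 * Dm 0) - Zm 0 * Zm 1 * Dm 1 + (Zm 0 * Zm 2 + Zm 1) * Dm 2
         + (u₂ - u₁ - 1) • Zm 0,
       -(Zm 0 * Dm 0) + Zm 2 * Dm 2 + (u₂ + 1) • 1,
       Dm 2 - Zm 0 * Dm 1;
     -(Zm 0 * Zm 1 * Dm 0) - Zm 1 * Zm 1 * Dm 1 - Zm 2 * (Zm 0 * Zm 2 + Zm 1) * Dm 2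
         + (u₃ - u₂ - 1) • (Zm 0 * Zm 2) + (u₃ - u₁ - 2) • Zm 1,
       -(Zm 1 * Dm 0) - Zm 2 * Zm 2 * Dm 2 + (u₃ - u₂ - 1) • Zm 2,
       -(Zm 1 * Dm 1) - Zm 2 * Dm 2 + u₃ • 1]

/-!
Only the canonical commutation relations of `ℂ[x,y,z]` enter: the multiplication operators
commute with each other, and the Leibniz rule gives `∂ᵢ xⱼ = xⱼ ∂ᵢ + δᵢⱼ`. Multiplying out
`M₋ · U · M₊` and moving every derivative to the right of every multiplication operator yields
exactly the normally ordered entries of `L(u₁,u₂,u₃)`; every constant in `L` that does not come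
from the `uᵢ` is a contribution of the `δᵢⱼ` terms.
-/

open LinearMap

theorem Derivation.toLinearMap_mul_mulLeft {R A : Type*} [CommSemiring R] [CommSemiring A]
    [Algebra R A] (D : Derivation R A A) (a : A) :
    D.toLinearMap * mulLeft R a = mulLeft R a * D.toLinearMap + mulLeft R (D a) := by
  ext b
  simp [D.leibniz, mul_comm]

/-- On `Module.End R M` the notation `-f` elaborates to `LinearMap.instNeg`, which the generic
`neg_mul` does not match. -/
theorem Module.End.neg_mul {R M : Type*} [Ring R] [AddCommGroup M] [Module R M]
    (f g : Module.End R M) : -f * g = -(f * g) :=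
  neg_comp g f

theorem Zm_mul_comm (i j : Fin 3) : Zm i * Zm j = Zm j * Zm i := by
  simp only [Zm, Module.End.mul_eq_comp, ← mulLeft_mul, mul_comm]

theorem Zm_mul_left_comm (i j : Fin 3) (T : E3) : Zm i * (Zm j * T) = Zm j * (Zm i * T) := by
  rw [← mul_assoc, Zm_mul_comm, mul_assoc]

theorem Dm_mul_Zm_self (i : Fin 3) : Dm i * Zm i = Zm i * Dm i + 1 := by
  simp [Dm, Zm, Derivation.toLinearMap_mul_mulLeft, Module.End.one_eq_id]

theorem Dm_mul_Zm_of_ne {i j : Fin 3} (h : i ≠ j) : Dm i * Zm j = Zm j * Dm i := by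
  simp [Dm, Zm, Derivation.toLinearMap_mul_mulLeft, h.symm]

theorem Dm_mul_Zm_mul_of_ne {i j : Fin 3} (h : i ≠ j) (T : E3) :
    Dm i * (Zm j * T) = Zm j * (Dm i * T) := by
  rw [← mul_assoc, Dm_mul_Zm_of_ne h, mul_assoc]

/-- Factorization of the `sl(3)` Lax matrix: `L(u₁,u₂,u₃) = M₋ · U · M₊` with
`M₋ = [[1,0,0],[−x,1,0],[−y,−z,1]]`, `U = [[u₁, ∂ₓ−z∂_y, ∂_y],[0,u₂,∂_z],[0,0,u₃]]`,
`M₊ = [[1,0,0],[x,1,0],[y+xz,z,1]]`. -/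
theorem sl3_lax_factorization (u₁ u₂ u₃ : ℂ) :
    L3 u₁ u₂ u₃ =
      !![(1 : E3), 0, 0; -Zm 0, 1, 0; -Zm 1, -Zm 2, 1] *
      !![u₁ • 1, Dm 0 - Zm 2 * Dm 1, Dm 1; 0, u₂ • 1, Dm 2; 0, 0, u₃ • 1] *
      !![(1 : E3), 0, 0; Zm 0, 1, 0; Zm 1 + Zm 0 * Zm 2, Zm 2, 1] := by
  rw [Matrix.mul_fin_three, Matrix.mul_fin_three, L3]
  simp only [EmbeddingLike.apply_eq_iff_eq, Matrix.vecCons_inj, and_true]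
  refine ⟨⟨?_, ?_, ?_⟩, ⟨?_, ?_, ?_⟩, ⟨?_, ?_, ?_⟩⟩ <;>
    simp (disch := decide) only [mul_add, add_mul, sub_mul, mul_sub, mul_assoc,
      Module.End.neg_mul, smul_mul_assoc, mul_smul_comm, mul_one, one_mul, mul_zero, zero_mul,
      add_zero, zero_add, Zm_mul_comm, Zm_mul_left_comm, Dm_mul_Zm_self, Dm_mul_Zm_of_ne,
      Dm_mul_Zm_mul_of_ne] <;>
    module
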